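/- arXiv:2007.04620 — 5 statements merged into one kernel-verified Lean document; each statement's English description precedes it below -/
import Mathlib

section
/- Let Π be a normal logic program and I a model of Π. If there exists a level mapping σ : I → ℕ such that every atom a ∈ I is proven (i.e., some rule r ∈ Π has a = H_r, B⁺_r ⊆ I, I ∩ B⁻_r = ∅, and σ(b) < σ(a) for all b ∈ B⁺_r), then I is a minimal model of the Gelfond–Lifschitz reduct Π^I, i.e., an answer set of Π. -/
/-- A normal rule: single head atom, positive and negative body. -/
structure NRule (A : Type) where
  head : A
  pos : Finset A
  neg : Finset A

/-- An interpretation I satisfies rule r. -/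
def Satisfies {A : Type} (I : Set A) (r : NRule A) : Prop :=
  r.head ∈ I ∨ (∃ b ∈ r.neg, b ∈ I) ∨ (∃ b ∈ r.pos, b ∉ I)

/-- I is a model of program P. -/
def IsModel {A : Type} (I : Set A) (P : Set (NRule A)) : Prop :=
  ∀ r ∈ P, Satisfies I r

/-- J satisfies the rule of the GL reduct of r under I (if r survives). -/
def ReductSat {A : Type} (I J : Set A) (r : NRule A) : Prop :=
  (∀ b ∈ r.neg, b ∉ I) → (r.head ∈ J ∨ ∃ b ∈ r.pos, b ∉ J)

/-- I is an answer set of P: a ⊆-minimal model of the GL reduct P^I. -/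
def IsAnswerSet {A : Type} (P : Set (NRule A)) (I : Set A) : Prop :=
  (∀ r ∈ P, ReductSat I I r) ∧
  ∀ J : Set A, J ⊆ I → (∀ r ∈ P, ReductSat I J r) → J = I

/-- If a model I of a normal program P admits a level mapping proving every
atom of I, then I is an answer set of P. -/
theorem answer_set_of_level_mapping {A : Type} (P : Set (NRule A)) (I : Set A)
    (σ : A → ℕ) (hmodel : IsModel I P)
    (hproven : ∀ a ∈ I, ∃ r ∈ P, r.head = a ∧ (∀ b ∈ r.pos, b ∈ I) ∧
      (∀ b ∈ r.neg, b ∉ I) ∧ ∀ b ∈ r.pos, σ b < σ a) :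
    IsAnswerSet P I := by
  constructor
  · intro r hr hneg
    rcases hmodel r hr with h | ⟨b, hb, hbI⟩ | ⟨b, hb, hbI⟩
    · exact Or.inl h
    · exact absurd hbI (hneg b hb)
    · exact Or.inr ⟨b, hb, hbI⟩
  · intro J hJI hred
    apply Set.Subset.antisymm hJI
    have key : ∀ n, ∀ a ∈ I, σ a = n → a ∈ J := by
      intro n
      induction n using Nat.strong_induction_on with
      | _ n ih =>
      intro a haI hn
      subst hn
      obtain ⟨r, hrP, hhead, hpos, hneg, hlt⟩ := hproven a haI
      rcases hred r hrP hneg with h | ⟨b, hb, hbJ⟩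
      · exact hhead ▸ h
      · exact absurd (ih (σ b) (hlt b hb) b (hpos b hb) rfl) hbJ
    exact fun a haI => key (σ a) a haI rfl
end

section
/- Conversely, if I is an answer set of a normal logic program Π, then there exists a level mapping σ : I → {0,…,|I|−1} such that every atom a ∈ I is proven by some rule r with H_r = a, B⁺_r ⊆ I, B⁻_r ∩ I = ∅, and σ(b) < σ(a) for all b ∈ B⁺_r. -/
/-- Iterated immediate-consequence operator of the reduct. -/
def Deriv {A : Type} (P : Set (NRule A)) (I : Set A) : ℕ → Set A
  | 0 => ∅
  | n + 1 => {a | ∃ r ∈ P, r.head = a ∧ (∀ b ∈ r.neg, b ∉ I) ∧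
      ∀ b ∈ r.pos, b ∈ Deriv P I n}

theorem Deriv_mono {A : Type} (P : Set (NRule A)) (I : Set A) :
    ∀ {m n : ℕ}, m ≤ n → Deriv P I m ⊆ Deriv P I n := by
  have step : ∀ n, Deriv P I n ⊆ Deriv P I (n + 1) := by
    intro n
    induction n with
    | zero => intro a ha; exact absurd ha (Set.notMem_empty a)
    | succ k ih =>
      rintro a ⟨r, hr, hh, hn, hp⟩
      exact ⟨r, hr, hh, hn, fun b hb => ih (hp b hb)⟩
  intro m n h
  induction h with
  | refl => exact fun _ h => h
  | step _ ih => exact fun a ha => step _ (ih ha)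

/-- Conversely, every answer set I of a normal program P admits a level mapping
with values in {0,…,|I|−1} proving every atom of I. -/
theorem level_mapping_of_answer_set {A : Type} (P : Set (NRule A)) (I : Finset A)
    (has : IsAnswerSet P (↑I : Set A)) :
    ∃ σ : A → ℕ, (∀ a ∈ I, σ a < I.card) ∧
      ∀ a ∈ I, ∃ r ∈ P, r.head = a ∧ (∀ b ∈ r.pos, b ∈ I) ∧
        (∀ b ∈ r.neg, b ∉ I) ∧ ∀ b ∈ r.pos, σ b < σ a := by
  classical
  set Iset : Set A := (↑I : Set A)
  -- every derived atom is in I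
  have hsub : ∀ n, Deriv P Iset n ⊆ Iset := by
    intro n
    induction n with
    | zero => exact fun a ha => absurd ha (Set.notMem_empty a)
    | succ k ih =>
      rintro a ⟨r, hr, hh, hn, hp⟩
      have hpos : ∀ b ∈ r.pos, b ∈ Iset := fun b hb => ih (hp b hb)
      rcases has.1 r hr hn with h | ⟨b, hb, hbI⟩
      · exact hh ▸ h
      · exact absurd (hpos b hb) hbI
  -- the union of all levels is a model of the reduct, hence equals I
  set U : Set A := ⋃ n, Deriv P Iset n with hU
  have hUsub : U ⊆ Iset := by
    rintro a ⟨s, ⟨n, rfl⟩, ha⟩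
    exact hsub n ha
  have hUsat : ∀ r ∈ P, ReductSat Iset U r := by
    intro r hr hneg
    by_cases hall : ∀ b ∈ r.pos, b ∈ U
    · left
      have hex : ∀ b ∈ r.pos, ∃ n, b ∈ Deriv P Iset n := by
        intro b hb
        rcases hall b hb with ⟨s, ⟨n, rfl⟩, hbn⟩
        exact ⟨n, hbn⟩
      choose f hf using hex
      set N := r.pos.attach.sup (fun b => f b.1 b.2) with hN
      have : r.head ∈ Deriv P Iset (N + 1) := by
        refine ⟨r, hr, rfl, hneg, fun b hb => ?_⟩
        exact Deriv_mono P Iset (Finset.le_sup (f := fun b : r.pos => f b.1 b.2)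
          (Finset.mem_attach _ ⟨b, hb⟩)) (hf b hb)
      exact Set.mem_iUnion.2 ⟨N + 1, this⟩
    · right
      push_neg at hall
      exact hall
  have hUI : U = Iset := has.2 U hUsub hUsat
  -- minimal level of each atom
  have hexists : ∀ a ∈ I, ∃ n, a ∈ Deriv P Iset n := by
    intro a ha
    have : a ∈ U := hUI ▸ (by exact_mod_cast ha : a ∈ Iset)
    rcases this with ⟨s, ⟨n, rfl⟩, h⟩
    exact ⟨n, h⟩
  set σ₀ : A → ℕ := fun a => if h : ∃ n, a ∈ Deriv P Iset n then Nat.find h else 0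
    with hσ₀
  have hσ₀mem : ∀ a ∈ I, a ∈ Deriv P Iset (σ₀ a) := by
    intro a ha
    have h := hexists a ha
    simp only [hσ₀, dif_pos h]
    exact Nat.find_spec h
  have hσ₀le : ∀ a n, a ∈ Deriv P Iset n → σ₀ a ≤ n := by
    intro a n han
    have h : ∃ m, a ∈ Deriv P Iset m := ⟨n, han⟩
    simp only [hσ₀, dif_pos h]
    exact Nat.find_le han
  -- the compressed mapping
  set σ : A → ℕ := fun a => (I.filter (fun b => σ₀ b < σ₀ a)).card with hσ
  refine ⟨σ, ?_, ?_⟩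
  · intro a ha
    have hsubf : I.filter (fun b => σ₀ b < σ₀ a) ⊆ I.erase a := by
      intro b hb
      rcases Finset.mem_filter.1 hb with ⟨hbI, hlt⟩
      exact Finset.mem_erase.2 ⟨fun h => by simp [h] at hlt, hbI⟩
    calc σ a ≤ (I.erase a).card := Finset.card_le_card hsubf
      _ < I.card := Finset.card_erase_lt_of_mem ha
  · intro a ha
    have hmem := hσ₀mem a ha
    have hpos0 : σ₀ a ≠ 0 := by
      intro h
      rw [h] at hmem
      exact Set.notMem_empty a hmem
    obtain ⟨k, hk⟩ : ∃ k, σ₀ a = k + 1 := ⟨σ₀ a - 1, (Nat.succ_pred_eq_of_ne_zero hpos0).symm⟩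
    rw [hk] at hmem
    rcases hmem with ⟨r, hr, hh, hn, hp⟩
    refine ⟨r, hr, hh, fun b hb => ?_, hn, fun b hb => ?_⟩
    · exact_mod_cast hsub k (hp b hb)
    · -- σ₀ b < σ₀ a
      have hbI : b ∈ I := by exact_mod_cast hsub k (hp b hb)
      have hblt : σ₀ b < σ₀ a := lt_of_le_of_lt (hσ₀le b k (hp b hb)) (hk ▸ Nat.lt_succ_self k)
      refine Finset.card_lt_card ?_
      constructor
      · intro c hc
        rcases Finset.mem_filter.1 hc with ⟨hcI, hlt⟩
        exact Finset.mem_filter.2 ⟨hcI, hlt.trans hblt⟩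
      · intro hcon
        have : b ∈ I.filter (fun c => σ₀ c < σ₀ b) :=
          hcon (Finset.mem_filter.2 ⟨hbI, hblt⟩)
        exact absurd (Finset.mem_filter.1 this).2 (lt_irrefl _)
end

section
/- If every atom of an answer set I of a normal program Π can be proven with an SCC-relative level mapping σ, then each atom a ∈ I can be proven with a level mapping whose values are bounded by the size of its SCC: there exists σ' with σ'(a) < |scc(a)| for all a ∈ I such that every atom in I is proven with σ'. -/
/-- Edge of the positive dependency digraph of program P. -/
def DepEdge {A : Type} (P : Set (NRule A)) (a b : A) : Prop :=
  ∃ r ∈ P, a ∈ r.pos ∧ b = r.head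

/-- Atoms a and b lie in the same SCC of the positive dependency graph. -/
def SameSCC {A : Type} (P : Set (NRule A)) (a b : A) : Prop :=
  Relation.ReflTransGen (DepEdge P) a b ∧ Relation.ReflTransGen (DepEdge P) b a

/-- Rule r proves atom a with SCC-relative level mapping σ under I. -/
def ProvesSCC {A : Type} (P : Set (NRule A)) (I : Set A) (σ : A → ℕ)
    (r : NRule A) (a : A) : Prop :=
  r.head = a ∧ (∀ b ∈ r.pos, b ∈ I) ∧ (∀ b ∈ r.neg, b ∉ I) ∧
    ∀ b ∈ r.pos, SameSCC P a b → σ b < σ a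

/-- If the atoms of an answer set I can be proven with an SCC-relative level
mapping, then they can be proven with one whose value at each atom a is
bounded by the size of the SCC of a. -/
theorem scc_bounded_level_mapping {A : Type} [Finite A] (P : Set (NRule A))
    (I : Set A) (has : IsAnswerSet P I) (σ : A → ℕ)
    (hproven : ∀ a ∈ I, ∃ r ∈ P, ProvesSCC P I σ r a) :
    ∃ σ' : A → ℕ, (∀ a ∈ I, σ' a < {b : A | SameSCC P a b}.ncard) ∧
      ∀ a ∈ I, ∃ r ∈ P, ProvesSCC P I σ' r a := by
  classical
  -- SameSCC is an equivalence
  have hrefl : ∀ a, SameSCC P a a := fun a => ⟨.refl, .refl⟩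
  have hsymm : ∀ {a b}, SameSCC P a b → SameSCC P b a := fun h => ⟨h.2, h.1⟩
  have htrans : ∀ {a b c}, SameSCC P a b → SameSCC P b c → SameSCC P a c :=
    fun h1 h2 => ⟨h1.1.trans h2.1, h2.2.trans h1.2⟩
  set S : A → Set ℕ := fun a => σ '' {b | SameSCC P a b ∧ b ∈ I} with hS
  have hSfin : ∀ a, (S a).Finite := fun a => (Set.toFinite _).image σ
  have hSeq : ∀ {a b}, SameSCC P a b → S a = S b := by
    intro a b hab
    apply congrArg (σ '' ·)
    ext c
    exact ⟨fun ⟨h1, h2⟩ => ⟨htrans (hsymm hab) h1, h2⟩,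
      fun ⟨h1, h2⟩ => ⟨htrans hab h1, h2⟩⟩
  set σ' : A → ℕ := fun a => (S a ∩ Set.Iio (σ a)).ncard with hσ'
  have hmemS : ∀ {a b}, SameSCC P a b → b ∈ I → σ b ∈ S a :=
    fun hab hb => ⟨_, ⟨hab, hb⟩, rfl⟩
  have hmono : ∀ {a b}, a ∈ I → b ∈ I → SameSCC P a b → σ b < σ a → σ' b < σ' a := by
    intro a b ha hb hab hlt
    simp only [hσ', hSeq (hsymm hab)]
    apply Set.ncard_lt_ncard _ ((hSfin a).inter_of_left _)
    constructor
    · exact Set.inter_subset_inter_right _ (fun n hn => lt_trans hn hlt)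
    · intro hsub
      have : σ b ∈ S a ∩ Set.Iio (σ b) := hsub ⟨hmemS hab hb, hlt⟩
      simp at this
  refine ⟨σ', ?_, ?_⟩
  · intro a ha
    have h1 : σ' a < (S a).ncard := by
      apply Set.ncard_lt_ncard _ (hSfin a)
      constructor
      · exact Set.inter_subset_left
      · intro hsub
        have : σ a ∈ S a ∩ Set.Iio (σ a) := hsub (hmemS (hrefl a) ha)
        simp at this
    have h2 : (S a).ncard ≤ {b | SameSCC P a b ∧ b ∈ I}.ncard :=
      Set.ncard_image_le (Set.toFinite _)
    have h3 : {b | SameSCC P a b ∧ b ∈ I}.ncard ≤ {b : A | SameSCC P a b}.ncard :=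
      Set.ncard_le_ncard (fun b hb => hb.1) (Set.toFinite _)
    omega
  · intro a ha
    obtain ⟨r, hr, hhead, hpos, hneg, hlvl⟩ := hproven a ha
    exact ⟨r, hr, hhead, hpos, hneg,
      fun b hb hscc => hmono ha (hpos b hb) hscc (hlvl b hb hscc)⟩
end

section
/- Let Π be a normal program, I a model of Π, and a ∈ I an atom such that no rule of Π proves a with any SCC-relative level mapping over I. Then I is not an answer set of Π; in fact I \ {a'} for some nonempty set of atoms including a within scc(a) ∩ I still satisfies the reduct Π^I, witnessing non-minimality. -/
/-- Iterated derivability within scc(a) ∩ I. -/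
def DIter {A : Type} (P : Set (NRule A)) (I : Set A) (a : A) : ℕ → Set A
  | 0 => ∅
  | n+1 => {b | SameSCC P a b ∧ b ∈ I ∧ ∃ r ∈ P, r.head = b ∧
      (∀ c ∈ r.pos, c ∈ I) ∧ (∀ c ∈ r.neg, c ∉ I) ∧
      ∀ c ∈ r.pos, SameSCC P a c → c ∈ DIter P I a n}

lemma DIter_succ {A : Type} (P : Set (NRule A)) (I : Set A) (a : A) :
    ∀ n : ℕ, DIter P I a n ⊆ DIter P I a (n+1) := by
  intro n
  induction n with
  | zero => intro x hx; exact hx.elim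
  | succ k ih =>
    rintro x ⟨h1, h2, r, hr, h3, h4, h5, h6⟩
    exact ⟨h1, h2, r, hr, h3, h4, h5, fun c hc hsc => ih (h6 c hc hsc)⟩

lemma DIter_mono {A : Type} (P : Set (NRule A)) (I : Set A) (a : A) :
    ∀ {m n : ℕ}, m ≤ n → DIter P I a m ⊆ DIter P I a n := by
  intro m n h
  induction h with
  | refl => exact le_refl _
  | step _ ih => exact ih.trans (DIter_succ P I a _)

/-- If some atom a of a model I cannot be proven by any rule with any
SCC-relative level mapping, then I is not an answer set: some nonempty subset
of scc(a) ∩ I containing a can be removed while still satisfying the GL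
reduct, witnessing non-minimality. -/
theorem not_answer_set_of_unprovable {A : Type} (P : Set (NRule A))
    (I : Set A) (a : A) (ha : a ∈ I) (hmodel : IsModel I P)
    (hunprov : ∀ σ : A → ℕ, ¬ ∃ r ∈ P, ProvesSCC P I σ r a) :
    ¬ IsAnswerSet P I ∧
      ∃ S : Set A, S ⊆ {b : A | SameSCC P a b} ∩ I ∧ a ∈ S ∧
        ∀ r ∈ P, ReductSat I (I \ S) r := by
  classical
  set D : Set A := ⋃ n, DIter P I a n with hD
  set σ : A → ℕ := fun b => sInf {n | b ∈ DIter P I a n} with hσ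
  -- a is not derivable
  have haD : a ∉ D := by
    intro haD
    apply hunprov σ
    have hne : {n | a ∈ DIter P I a n}.Nonempty := by
      obtain ⟨_, ⟨n, rfl⟩, hn⟩ := haD
      exact ⟨n, hn⟩
    have hmem : a ∈ DIter P I a (σ a) := Nat.sInf_mem hne
    have hpos : σ a ≠ 0 := by
      intro h0
      rw [h0] at hmem
      exact hmem.elim
    obtain ⟨m, hm⟩ := Nat.exists_eq_succ_of_ne_zero hpos
    rw [hm] at hmem
    obtain ⟨h1, h2, r, hr, h3, h4, h5, h6⟩ := hmem
    refine ⟨r, hr, h3, h4, h5, fun b hb hsc => ?_⟩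
    have : σ b ≤ m := Nat.sInf_le (h6 b hb hsc)
    omega
  refine ?_
  set S : Set A := ({b : A | SameSCC P a b} ∩ I) \ D with hS
  have haS : a ∈ S :=
    ⟨⟨⟨Relation.ReflTransGen.refl, Relation.ReflTransGen.refl⟩, ha⟩, haD⟩
  have hred : ∀ r ∈ P, ReductSat I (I \ S) r := by
    intro r hr hneg
    by_contra hcon
    push_neg at hcon
    obtain ⟨hhead, hpos⟩ := hcon
    have hposI : ∀ c ∈ r.pos, c ∈ (I \ S) := hpos
    have hheadI : r.head ∈ I := by
      rcases hmodel r hr with h | ⟨b, hb, hbI⟩ | ⟨b, hb, hbI⟩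
      · exact h
      · exact absurd hbI (hneg b hb)
      · exact absurd (hposI b hb).1 hbI
    have hheadS : r.head ∈ S := by
      by_contra h
      exact hhead ⟨hheadI, h⟩
    obtain ⟨⟨hscc, _⟩, hnD⟩ := hheadS
    -- build a stage at which head is derivable
    have hstage : ∀ c ∈ r.pos, SameSCC P a c → ∃ n, c ∈ DIter P I a n := by
      intro c hc hsc
      have hcIS : c ∈ I \ S := hposI c hc
      have : c ∉ S := hcIS.2
      have hcD : c ∈ D := by
        by_contra hcD
        exact this ⟨⟨hsc, hcIS.1⟩, hcD⟩
      obtain ⟨_, ⟨n, rfl⟩, hn⟩ := hcD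
      exact ⟨n, hn⟩
    set N : ℕ := r.pos.sup σ with hN
    have : r.head ∈ DIter P I a (N + 1) := by
      refine ⟨hscc, hheadI, r, hr, rfl, fun c hc => (hposI c hc).1,
        hneg, fun c hc hsc => ?_⟩
      obtain ⟨n, hn⟩ := hstage c hc hsc
      have hmem : c ∈ DIter P I a (σ c) := Nat.sInf_mem (⟨n, hn⟩ : {n | c ∈ DIter P I a n}.Nonempty)
      exact DIter_mono P I a (Finset.le_sup hc) hmem
    exact hnD (Set.mem_iUnion.mpr ⟨N + 1, this⟩)
  refine ⟨?_, S, Set.diff_subset, haS, hred⟩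
  rintro ⟨_, hmin⟩
  have := hmin (I \ S) Set.diff_subset hred
  have : a ∈ I \ S := this.symm ▸ ha
  exact this.2 haS
end

section
/- For an answer set I of a normal program Π, there is a unique minimal SCC-relative level mapping proving I: the pointwise-least function σ : I → ℕ such that every a ∈ I is proven with σ, and for every a ∈ I with σ(a) > 0, no rule proves a with the mapping obtained from σ by decreasing σ(a) by one. -/
/-- σ proves every atom of I (SCC-relatively). -/
def ProvesAll {A : Type} (P : Set (NRule A)) (I : Set A) (σ : A → ℕ) : Prop :=
  ∀ a ∈ I, ∃ r ∈ P, ProvesSCC P I σ r a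

/-- σ is locally minimal: no positive level can be decreased by one while
keeping its atom provable. -/
def LocallyMinimal {A : Type} [DecidableEq A] (P : Set (NRule A)) (I : Set A)
    (σ : A → ℕ) : Prop :=
  ∀ a ∈ I, 0 < σ a →
    ¬ ∃ r ∈ P, ProvesSCC P I (Function.update σ a (σ a - 1)) r a

/-- Existence and uniqueness (on I) of the minimal SCC-relative level mapping
proving an answer set I: it proves I, is locally minimal, is pointwise least
among all proving mappings, and any locally minimal proving mapping agrees
with it on I. -/
theorem unique_minimal_level_mapping {A : Type} [DecidableEq A]
    (P : Set (NRule A)) (I : Set A) (has : IsAnswerSet P I)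
    (hex : ∃ σ₀ : A → ℕ, ProvesAll P I σ₀) :
    ∃ σ : A → ℕ, ProvesAll P I σ ∧ LocallyMinimal P I σ ∧
      (∀ σ' : A → ℕ, ProvesAll P I σ' → ∀ a ∈ I, σ a ≤ σ' a) ∧
      (∀ σ'' : A → ℕ, ProvesAll P I σ'' → LocallyMinimal P I σ'' →
        ∀ a ∈ I, σ'' a = σ a) := by
  classical
  obtain ⟨σ₀, hσ₀⟩ := hex
  set σ : A → ℕ := fun a => sInf {n | ∃ σ', ProvesAll P I σ' ∧ σ' a = n} with hσdef
  have hne : ∀ a, {n | ∃ σ', ProvesAll P I σ' ∧ σ' a = n}.Nonempty :=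
    fun a => ⟨σ₀ a, σ₀, hσ₀, rfl⟩
  have hle : ∀ σ', ProvesAll P I σ' → ∀ a, σ a ≤ σ' a :=
    fun σ' h a => Nat.sInf_le ⟨σ', h, rfl⟩
  have hproves : ProvesAll P I σ := by
    intro a ha
    obtain ⟨σ', hσ', hval⟩ := Nat.sInf_mem (hne a)
    obtain ⟨r, hr, hhead, hpos, hneg, hlt⟩ := hσ' a ha
    refine ⟨r, hr, hhead, hpos, hneg, fun b hb hscc => ?_⟩
    have : σ a = σ' a := hval.symm
    calc σ b ≤ σ' b := hle σ' hσ' b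
      _ < σ' a := hlt b hb hscc
      _ = σ a := hval
  have hlm : LocallyMinimal P I σ := by
    rintro a ha hpos0 ⟨r, hr, hhead, hposs, hneg, hlt⟩
    have hP : ProvesAll P I (Function.update σ a (σ a - 1)) := by
      intro c hc
      by_cases hca : c = a
      · subst hca; exact ⟨r, hr, hhead, hposs, hneg, hlt⟩
      · obtain ⟨r', hr', hh', hp', hn', hl'⟩ := hproves c hc
        refine ⟨r', hr', hh', hp', hn', fun b hb hscc => ?_⟩
        have h1 : Function.update σ a (σ a - 1) b ≤ σ b := by
          by_cases hba : b = a
          · subst hba; rw [Function.update_self]; omega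
          · rw [Function.update_of_ne hba]
        have h2 : Function.update σ a (σ a - 1) c = σ c :=
          Function.update_of_ne hca _ _
        calc Function.update σ a (σ a - 1) b ≤ σ b := h1
          _ < σ c := hl' b hb hscc
          _ = Function.update σ a (σ a - 1) c := h2.symm
    have := hle _ hP a
    rw [Function.update_self] at this
    omega
  refine ⟨σ, hproves, hlm, fun σ' h a _ => hle σ' h a, ?_⟩
  intro σ'' hp'' hlm'' a ha
  -- strong induction on σ a
  have key : ∀ n, ∀ a ∈ I, σ a = n → σ'' a = σ a := by
    intro n
    induction n using Nat.strong_induction_on with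
    | _ n ih =>
      intro a ha hn
      have hle' : σ a ≤ σ'' a := hle σ'' hp'' a
      rcases eq_or_lt_of_le hle' with h | h
      · exact h.symm
      · exfalso
        obtain ⟨r, hr, hhead, hposs, hneg, hlt⟩ := hproves a ha
        refine hlm'' a ha (by omega) ⟨r, hr, hhead, hposs, hneg, ?_⟩
        intro b hb hscc
        have hb1 : σ b < σ a := hlt b hb hscc
        have hbI : b ∈ I := hposs b hb
        have hEq : σ'' b = σ b := by
          have := ih (σ b) (by omega) b hbI rfl
          omega
        have hba : b ≠ a := fun e => by rw [e] at hb1; omega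
        rw [Function.update_of_ne hba, Function.update_self]
        omega
  exact key (σ a) a ha rfl
end
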